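/- Let V ∈ Sym(n) and E ∈ ℝ^{p×n}. If for all μ > 0 the matrix ρI + V + μEᵀE (with ρ > 0 fixed) fails to be positive definite, then there exists a unit vector z̄ with Ez̄ = 0 and z̄ᵀVz̄ < 0; in particular V is not positive semidefinite on Null(E). -/

import Mathlib

/-!
If `V` were positive semidefinite on `Null(E)`, then `ρ I + V` would be positive definite on
`Null(E)`, which is the zero set of the positive semidefinite form `zᵀ Eᵀ E z`. Finsler's lemma
then makes `ρ I + V + μ Eᵀ E` positive definite for some `μ > 0`.
-/

open Matrix

section

variable {ι : Type*} [Fintype ι]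

lemma dotProduct_self_pos_of_ne_zero {x : ι → ℝ} (hx : x ≠ 0) : 0 < x ⬝ᵥ x := by
  simpa using dotProduct_star_self_pos_iff.mpr hx

lemma smul_dotProduct_mulVec_smul (M : Matrix ι ι ℝ) (c : ℝ) (x : ι → ℝ) :
    (c • x) ⬝ᵥ M *ᵥ (c • x) = c ^ 2 * (x ⬝ᵥ M *ᵥ x) := by
  rw [mulVec_smul, smul_dotProduct, dotProduct_smul, smul_eq_mul, smul_eq_mul]
  ring

lemma dotProduct_add_smul_mulVec (A B : Matrix ι ι ℝ) (μ : ℝ) (x : ι → ℝ) :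
    x ⬝ᵥ (A + μ • B) *ᵥ x = x ⬝ᵥ A *ᵥ x + μ * (x ⬝ᵥ B *ᵥ x) := by
  rw [add_mulVec, smul_mulVec, dotProduct_add, dotProduct_smul, smul_eq_mul]

lemma dotProduct_transpose_mul_self_mulVec {κ : Type*} [Fintype κ] (E : Matrix κ ι ℝ)
    (x : ι → ℝ) : x ⬝ᵥ (Eᵀ * E) *ᵥ x = E *ᵥ x ⬝ᵥ E *ᵥ x := by
  rw [← mulVec_mulVec, dotProduct_mulVec, vecMul_transpose]

lemma exists_smul_dotProduct_self_eq_one {x : ι → ℝ} (hx : x ≠ 0) :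
    ∃ c : ℝ, c ≠ 0 ∧ (c • x) ⬝ᵥ (c • x) = 1 := by
  have hpos := dotProduct_self_pos_of_ne_zero hx
  refine ⟨(√(x ⬝ᵥ x))⁻¹, by positivity, ?_⟩
  rw [smul_dotProduct, dotProduct_smul, smul_eq_mul, smul_eq_mul, ← mul_assoc, ← sq, inv_pow,
    Real.sq_sqrt hpos.le, inv_mul_cancel₀ hpos.ne']

/-- Finsler's lemma. The open sets `{x | 0 < xᵀ (A + (k + 1) B) x}` increase with `k` and cover
the unit sphere, so by compactness one of them contains it. -/
theorem exists_posDef_add_smul_of_pos_of_dotProduct_mulVec_eq_zero {A B : Matrix ι ι ℝ}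
    (hA : A.IsHermitian) (hB : B.PosSemidef)
    (hAB : ∀ x ≠ 0, x ⬝ᵥ B *ᵥ x = 0 → 0 < x ⬝ᵥ A *ᵥ x) :
    ∃ μ : ℝ, 0 < μ ∧ (A + μ • B).PosDef := by
  have hB_nonneg (x : ι → ℝ) : 0 ≤ x ⬝ᵥ B *ᵥ x := by simpa using hB.dotProduct_mulVec_nonneg x
  let U (k : ℕ) : Set (ι → ℝ) := {x | 0 < x ⬝ᵥ (A + ((k : ℝ) + 1) • B) *ᵥ x}
  have hU_open (k : ℕ) : IsOpen (U k) := isOpen_lt continuous_const (by fun_prop)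
  have hU_mono : Monotone U := by
    intro k l hkl x hx
    simp only [U, Set.mem_ofPred_eq, dotProduct_add_smul_mulVec] at hx ⊢
    refine hx.trans_le ?_
    gcongr
    exact hB_nonneg x
  have hU_cover : Metric.sphere (0 : ι → ℝ) 1 ⊆ ⋃ k, U k := by
    intro x hx
    have hx0 : x ≠ 0 := ne_zero_of_norm_ne_zero (by simp_all)
    simp only [U, Set.mem_iUnion, Set.mem_ofPred_eq, dotProduct_add_smul_mulVec]
    rcases (hB_nonneg x).eq_or_lt with hBx | hBx
    · exact ⟨0, by simpa [← hBx] using hAB x hx0 hBx.symm⟩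
    · obtain ⟨k, hk⟩ := exists_nat_gt (-(x ⬝ᵥ A *ᵥ x) / (x ⬝ᵥ B *ᵥ x))
      rw [div_lt_iff₀ hBx] at hk
      exact ⟨k, by nlinarith⟩
  obtain ⟨k, hk⟩ := (isCompact_sphere 0 1).elim_directed_cover U hU_open hU_cover
    hU_mono.directed_le
  refine ⟨k + 1, by positivity, posDef_iff_dotProduct_mulVec.mpr
    ⟨hA.add (hB.1.smul (IsSelfAdjoint.all _)), fun x hx => ?_⟩⟩
  have hxk : 0 < ‖x‖⁻¹ ^ 2 * (x ⬝ᵥ (A + ((k : ℝ) + 1) • B) *ᵥ x) := by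
    rw [← smul_dotProduct_mulVec_smul]
    exact hk (mem_sphere_zero_iff_norm.mpr (norm_smul_inv_norm (𝕜 := ℝ) hx))
  simpa using pos_of_mul_pos_right hxk (by positivity)

end

theorem stmt_9 (n p : ℕ) (ρ : ℝ) (hρ : 0 < ρ)
    (V : Matrix (Fin n) (Fin n) ℝ) (hV : V.IsSymm)
    (E : Matrix (Fin p) (Fin n) ℝ)
    (h : ∀ μ : ℝ, 0 < μ →
      ¬ (ρ • (1 : Matrix (Fin n) (Fin n) ℝ) + V + μ • (E.transpose * E)).PosDef) :
    ∃ z : Fin n → ℝ, z ⬝ᵥ z = 1 ∧ E.mulVec z = 0 ∧ z ⬝ᵥ V.mulVec z < 0 := by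
  by_contra! hV_nonneg
  have hA : (ρ • (1 : Matrix (Fin n) (Fin n) ℝ) + V).IsHermitian :=
    (isHermitian_one.smul (IsSelfAdjoint.all ρ)).add hV
  have hB : (Eᵀ * E).PosSemidef := by simpa using posSemidef_conjTranspose_mul_self E
  have hA_pos_on_ker (x : Fin n → ℝ) (hx : x ≠ 0) (hBx : x ⬝ᵥ (Eᵀ * E) *ᵥ x = 0) :
      0 < x ⬝ᵥ (ρ • 1 + V) *ᵥ x := by
    have hEx : E *ᵥ x = 0 :=
      dotProduct_self_eq_zero.mp (dotProduct_transpose_mul_self_mulVec E x ▸ hBx)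
    obtain ⟨c, hc, hcx⟩ := exists_smul_dotProduct_self_eq_one hx
    have hVx : 0 ≤ x ⬝ᵥ V *ᵥ x := by
      have := hV_nonneg _ hcx (by rw [mulVec_smul, hEx, smul_zero])
      rw [smul_dotProduct_mulVec_smul] at this
      exact nonneg_of_mul_nonneg_right this (by positivity)
    rw [add_mulVec, dotProduct_add, smul_mulVec, one_mulVec, dotProduct_smul, smul_eq_mul]
    nlinarith [dotProduct_self_pos_of_ne_zero hx]
  obtain ⟨μ, hμ, hpd⟩ :=
    exists_posDef_add_smul_of_pos_of_dotProduct_mulVec_eq_zero hA hB hA_pos_on_ker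
  exact h μ hμ hpd
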